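/- arXiv:0904.4743 — 2 statements merged into one kernel-verified Lean document; each statement's English description precedes it below -/
import Mathlib

section
/- Fix b ∈ [p,q] and define B_1(λ) = ∫_0^1 B'(t(λ−b)+b) dt. Then B_1(λ) = (B(λ)−B(b))/(λ−b) for all λ ∈ [p,q] with λ ≠ b, B_1 is of class C^{N−1} on [p,q], and ε·(−1)^{1+m} B_1^{(m)}(λ) < 0 for all λ ∈ [p,q] and all 0 ≤ m ≤ N−1. -/
/-!
`B₁ = segmentMoment B' b 0`, where `segmentMoment φ b k x = ∫₀¹ tᵏ φ(t(x-b)+b) dt`. The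
fundamental theorem of calculus after the substitution `y = t(x-b)+b` gives the divided
difference. Differentiating under the integral sign `k` times (dominated convergence on a compact
neighbourhood) gives `B₁⁽ᵏ⁾ = segmentMoment B⁽ᵏ⁺¹⁾ b k`. Since `t(x-b)+b ∈ [p,q]` and `tᵏ > 0`
on `(0,1)`, this integral has the strict sign of `B⁽ᵏ⁺¹⁾` on `[p,q]`.
-/

open Set MeasureTheory intervalIntegral
open scoped Interval

section IteratedDeriv

variable {𝕜 F : Type*} [NontriviallyNormedField 𝕜] [NormedAddCommGroup F] [NormedSpace 𝕜 F]
  {f : 𝕜 → F} {U : Set 𝕜} {n : WithTop ℕ∞} {k : ℕ}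

theorem ContDiffOn.continuousOn_iteratedDeriv_of_isOpen (hf : ContDiffOn 𝕜 n f U)
    (hU : IsOpen U) (hk : k ≤ n) : ContinuousOn (iteratedDeriv k f) U :=
  (hf.continuousOn_iteratedDerivWithin hk hU.uniqueDiffOn).congr
    (iteratedDerivWithin_of_isOpen hU).symm

theorem ContDiffOn.hasDerivAt_iteratedDeriv_of_isOpen (hf : ContDiffOn 𝕜 n f U)
    (hU : IsOpen U) (hk : k < n) {x : 𝕜} (hx : x ∈ U) :
    HasDerivAt (iteratedDeriv k f) (iteratedDeriv (k + 1) f x) x := by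
  rw [iteratedDeriv_succ]
  exact (((hf.differentiableOn_iteratedDerivWithin hk hU.uniqueDiffOn).congr
    (iteratedDerivWithin_of_isOpen hU).symm).differentiableAt (hU.mem_nhds hx)).hasDerivAt

end IteratedDeriv

theorem integral_deriv_comp_segment_eq_div {f : ℝ → ℝ} {b x : ℝ} (hxb : x ≠ b)
    (hf : ∀ y ∈ uIcc b x, DifferentiableAt ℝ f y)
    (hf' : IntervalIntegrable (deriv f) volume b x) :
    ∫ t in (0 : ℝ)..1, deriv f (t * (x - b) + b) = (f x - f b) / (x - b) :=
  calc ∫ t in (0 : ℝ)..1, deriv f (t * (x - b) + b)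
      = ∫ t in (0 : ℝ)..1, deriv f ((x - b) * t + b) := by simp only [mul_comm]
    _ = (x - b)⁻¹ • ∫ y in (x - b) * 0 + b..(x - b) * 1 + b, deriv f y :=
        integral_comp_mul_add _ (sub_ne_zero.2 hxb) b
    _ = (f x - f b) / (x - b) := by
        rw [mul_zero, zero_add, mul_one, sub_add_cancel, integral_deriv_eq_sub hf hf',
          smul_eq_mul, inv_mul_eq_div]

noncomputable def segmentMoment (φ : ℝ → ℝ) (b : ℝ) (m : ℕ) (x : ℝ) : ℝ :=
  ∫ t in (0 : ℝ)..1, t ^ m * φ (t * (x - b) + b)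

section SegmentMoment

variable {U : Set ℝ} {φ φ' : ℝ → ℝ} {b x : ℝ}

theorem Convex.mul_sub_add_mem (hU : Convex ℝ U) (hb : b ∈ U) (hx : x ∈ U) {t : ℝ}
    (ht : t ∈ Icc (0 : ℝ) 1) : t * (x - b) + b ∈ U := by
  simpa only [smul_eq_mul, add_comm] using hU.add_smul_sub_mem hb hx ht

theorem continuousOn_segmentIntegrand (hU : Convex ℝ U) (hb : b ∈ U) (hφ : ContinuousOn φ U)
    (hx : x ∈ U) (m : ℕ) : ContinuousOn (fun t => t ^ m * φ (t * (x - b) + b)) (uIcc 0 1) := by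
  rw [uIcc_of_le zero_le_one]
  exact (continuousOn_pow m).mul
    (hφ.comp (by fun_prop) fun t ht => hU.mul_sub_add_mem hb hx ht)

theorem aestronglyMeasurable_segmentIntegrand (hU : Convex ℝ U) (hb : b ∈ U)
    (hφ : ContinuousOn φ U) (hx : x ∈ U) (m : ℕ) :
    AEStronglyMeasurable (fun t => t ^ m * φ (t * (x - b) + b)) (volume.restrict (Ι 0 1)) :=
  ((continuousOn_segmentIntegrand hU hb hφ hx m).mono uIoc_subset_uIcc).aestronglyMeasurable
    measurableSet_uIoc

theorem exists_bound_segmentIntegrand (hU : Convex ℝ U) (hb : b ∈ U) (hφ : ContinuousOn φ U)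
    {K : Set ℝ} (hK : IsCompact K) (hKU : K ⊆ U) (m : ℕ) :
    ∃ C, ∀ x ∈ K, ∀ t ∈ Ι (0 : ℝ) 1, ‖t ^ m * φ (t * (x - b) + b)‖ ≤ C := by
  have hcont : ContinuousOn (fun z : ℝ × ℝ => z.2 ^ m * φ (z.2 * (z.1 - b) + b))
      (K ×ˢ Icc 0 1) :=
    (continuousOn_snd.pow m).mul
      (hφ.comp (by fun_prop) fun z hz => hU.mul_sub_add_mem hb (hKU hz.1) hz.2)
  obtain ⟨C, hC⟩ := (hK.prod isCompact_Icc).exists_bound_of_continuousOn hcont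
  refine ⟨C, fun x hx t ht => hC (x, t) ⟨hx, ?_⟩⟩
  rw [uIoc_of_le zero_le_one] at ht
  exact Ioc_subset_Icc_self ht

variable (hUo : IsOpen U) (hU : Convex ℝ U) (hb : b ∈ U)
include hUo hU hb

theorem continuousOn_segmentMoment (hφ : ContinuousOn φ U) (m : ℕ) :
    ContinuousOn (segmentMoment φ b m) U := by
  intro x₀ hx₀
  obtain ⟨K, hK, hKU, hKc⟩ := local_compact_nhds (hUo.mem_nhds hx₀)
  obtain ⟨C, hC⟩ := exists_bound_segmentIntegrand hU hb hφ hKc hKU m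
  refine (continuousAt_of_dominated_interval (bound := fun _ => C) ?_ ?_
    intervalIntegrable_const ?_).continuousWithinAt
  · filter_upwards [hK] with x hx
    exact aestronglyMeasurable_segmentIntegrand hU hb hφ (hKU hx) m
  · filter_upwards [hK] with x hx
    exact ae_of_all _ (hC x hx)
  · refine ae_of_all _ fun t ht => ?_
    rw [uIoc_of_le zero_le_one] at ht
    have hφt := hφ.continuousAt
      (hUo.mem_nhds (hU.mul_sub_add_mem hb hx₀ (Ioc_subset_Icc_self ht)))
    exact continuousAt_const.mul (hφt.comp (f := fun x => t * (x - b) + b) (by fun_prop))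

theorem hasDerivAt_segmentMoment (hφ : ∀ y ∈ U, HasDerivAt φ (φ' y) y)
    (hφ' : ContinuousOn φ' U) (m : ℕ) {x₀ : ℝ} (hx₀ : x₀ ∈ U) :
    HasDerivAt (segmentMoment φ b m) (segmentMoment φ' b (m + 1) x₀) x₀ := by
  have hφc : ContinuousOn φ U := fun y hy => (hφ y hy).continuousAt.continuousWithinAt
  obtain ⟨K, hK, hKU, hKc⟩ := local_compact_nhds (hUo.mem_nhds hx₀)
  obtain ⟨C, hC⟩ := exists_bound_segmentIntegrand hU hb hφ' hKc hKU (m + 1)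
  refine (hasDerivAt_integral_of_dominated_loc_of_deriv_le (bound := fun _ => C)
    (F' := fun x t => t ^ (m + 1) * φ' (t * (x - b) + b)) hK ?_
    ((continuousOn_segmentIntegrand hU hb hφc hx₀ m).intervalIntegrable)
    (aestronglyMeasurable_segmentIntegrand hU hb hφ' hx₀ (m + 1))
    (ae_of_all _ fun t ht x hx => hC x hx t ht) intervalIntegrable_const
    (ae_of_all _ fun t ht x hx => ?_)).2
  · filter_upwards [hK] with x hx
    exact aestronglyMeasurable_segmentIntegrand hU hb hφc (hKU hx) m
  · rw [uIoc_of_le zero_le_one] at ht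
    have hy := hU.mul_sub_add_mem hb (hKU hx) (Ioc_subset_Icc_self ht)
    have hline : HasDerivAt (fun x => t * (x - b) + b) t x := by
      simpa using (((hasDerivAt_id x).sub_const b).const_mul t).add_const b
    rw [show t ^ (m + 1) * φ' (t * (x - b) + b) = t ^ m * (φ' (t * (x - b) + b) * t) by ring]
    exact ((hφ _ hy).comp x hline).const_mul (t ^ m)

theorem iteratedDerivWithin_segmentMoment {n : ℕ} (hφ : ContDiffOn ℝ n φ U) {s : Set ℝ}
    (hs : UniqueDiffOn ℝ s) (hsU : s ⊆ U) {k : ℕ} (hk : k ≤ n) :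
    EqOn (iteratedDerivWithin k (segmentMoment φ b 0) s)
      (segmentMoment (iteratedDeriv k φ) b k) s := by
  induction k with
  | zero =>
    intro x _
    simp only [iteratedDerivWithin_zero, iteratedDeriv_zero]
  | succ k ih =>
    intro x hx
    rw [iteratedDerivWithin_succ, derivWithin_congr (ih (by omega)) (ih (by omega) hx)]
    exact ((hasDerivAt_segmentMoment hUo hU hb
      (fun y hy => hφ.hasDerivAt_iteratedDeriv_of_isOpen hUo (by exact_mod_cast hk) hy)
      (hφ.continuousOn_iteratedDeriv_of_isOpen hUo (by exact_mod_cast hk)) k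
      (hsU hx)).hasDerivWithinAt).derivWithin (hs x hx)

theorem contDiffOn_segmentMoment {n : ℕ} (hφ : ContDiffOn ℝ n φ U) :
    ContDiffOn ℝ n (segmentMoment φ b 0) U := by
  rw [contDiffOn_nat_iff_continuousOn_differentiableOn_deriv hUo.uniqueDiffOn]
  refine ⟨fun k hk => ?_, fun k hk => ?_⟩
  · exact (continuousOn_segmentMoment hUo hU hb
      (hφ.continuousOn_iteratedDeriv_of_isOpen hUo (by exact_mod_cast hk)) k).congr
      (iteratedDerivWithin_segmentMoment hUo hU hb hφ hUo.uniqueDiffOn subset_rfl hk)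
  · refine DifferentiableOn.congr (fun x hx => ?_)
      (iteratedDerivWithin_segmentMoment hUo hU hb hφ hUo.uniqueDiffOn subset_rfl hk.le)
    exact (hasDerivAt_segmentMoment hUo hU hb
      (fun y hy => hφ.hasDerivAt_iteratedDeriv_of_isOpen hUo (by exact_mod_cast hk) hy)
      (hφ.continuousOn_iteratedDeriv_of_isOpen hUo (by exact_mod_cast hk)) k
      hx).differentiableAt.differentiableWithinAt

end SegmentMoment

theorem mul_segmentMoment_neg {s : Set ℝ} {φ : ℝ → ℝ} {b x c : ℝ} (hs : Convex ℝ s)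
    (hb : b ∈ s) (hx : x ∈ s) (hφ : ContinuousOn φ s) (hc : ∀ y ∈ s, c * φ y < 0) (m : ℕ) :
    c * segmentMoment φ b m x < 0 := by
  have hpos : 0 < ∫ t in (0 : ℝ)..1, -c * (t ^ m * φ (t * (x - b) + b)) := by
    refine intervalIntegral_pos_of_pos_on
      ((continuousOn_segmentIntegrand hs hb hφ hx m).const_smul (-c)).intervalIntegrable
      (fun t ht => ?_) zero_lt_one
    have hneg := hc _ (hs.mul_sub_add_mem hb hx (Ioo_subset_Icc_self ht))
    rw [show -c * (t ^ m * φ (t * (x - b) + b)) = t ^ m * -(c * φ (t * (x - b) + b)) by ring]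
    exact mul_pos (pow_pos ht.1 m) (neg_pos.2 hneg)
  rw [intervalIntegral.integral_const_mul] at hpos
  unfold segmentMoment
  linarith

theorem stmt_6_general (N : ℕ) (hN : 1 ≤ N) (p q : ℝ) (hpq : p < q)
    (ε : ℝ)
    (B : ℝ → ℝ) (u v : ℝ) (hu : u < p) (hv : q < v)
    (hB : ContDiffOn ℝ (↑N) B (Set.Ioo u v))
    (hBd : ∀ m, 1 ≤ m → m ≤ N → ∀ x ∈ Set.Icc p q,
      ε * ((-1 : ℝ) ^ m * iteratedDeriv m B x) < 0)
    (b : ℝ) (hb : b ∈ Set.Icc p q) :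
    (∀ x ∈ Set.Icc p q, x ≠ b →
      (∫ t in (0:ℝ)..1, deriv B (t * (x - b) + b)) = (B x - B b) / (x - b)) ∧
    ContDiffOn ℝ (↑(N - 1)) (fun x => ∫ t in (0:ℝ)..1, deriv B (t * (x - b) + b))
      (Set.Icc p q) ∧
    ∀ m, m ≤ N - 1 → ∀ x ∈ Set.Icc p q,
      ε * ((-1 : ℝ) ^ (1 + m) *
        iteratedDerivWithin m (fun y => ∫ t in (0:ℝ)..1, deriv B (t * (y - b) + b))
          (Set.Icc p q) x) < 0 := by
  have hsU : Icc p q ⊆ Ioo u v := Icc_subset_Ioo hu hv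
  have hB' : ContDiffOn ℝ (↑(N - 1)) (deriv B) (Ioo u v) :=
    hB.deriv_of_isOpen isOpen_Ioo (by exact_mod_cast (by omega : N - 1 + 1 ≤ N))
  have hB₁ : (fun x => ∫ t in (0:ℝ)..1, deriv B (t * (x - b) + b))
      = segmentMoment (deriv B) b 0 := by
    funext x
    simp only [segmentMoment, pow_zero, one_mul]
  refine ⟨fun x hx hxb => ?_, ?_, fun m hm x hx => ?_⟩
  · have hseg : uIcc b x ⊆ Ioo u v := (uIcc_subset_Icc hb hx).trans hsU
    exact integral_deriv_comp_segment_eq_div hxb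
      (fun y hy => (hB.differentiableOn (by exact_mod_cast (by omega : N ≠ 0)) y (hseg hy)).differentiableAt
        (isOpen_Ioo.mem_nhds (hseg hy)))
      ((hB'.continuousOn.mono hseg).intervalIntegrable)
  · rw [hB₁]
    exact (contDiffOn_segmentMoment isOpen_Ioo (convex_Ioo u v) (hsU hb) hB').mono hsU
  · rw [hB₁, iteratedDerivWithin_segmentMoment isOpen_Ioo (convex_Ioo u v) (hsU hb) hB'
      (uniqueDiffOn_Icc hpq) hsU hm hx, ← iteratedDeriv_succ', add_comm 1 m, ← mul_assoc]
    refine mul_segmentMoment_neg (convex_Icc p q) hb hx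
      ((hB.continuousOn_iteratedDeriv_of_isOpen isOpen_Ioo (by exact_mod_cast (by omega))).mono
        hsU) (fun y hy => ?_) m
    rw [mul_assoc]
    exact hBd (m + 1) (by omega) (by omega) y hy

/-- inductive step in Lemma 4.3.  If `B` is `C^N` on an open interval
containing `[p,q]` with `ε·(−1)^m B^{(m)} < 0` on `[p,q]` for `1 ≤ m ≤ N`
(`ε = ±1`), and `b ∈ [p,q]`, then `B₁(λ) = ∫_0^1 B'(t(λ−b)+b) dt` equals the divided
difference `(B(λ)−B(b))/(λ−b)` for `λ ≠ b`, is `C^{N−1}` on `[p,q]`, and satisfies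
`ε·(−1)^{1+m} B₁^{(m)}(λ) < 0` on `[p,q]` for `0 ≤ m ≤ N−1`. -/
theorem stmt_6 (N : ℕ) (hN : 1 ≤ N) (p q : ℝ) (hpq : p < q)
    (ε : ℝ) (hε : ε = 1 ∨ ε = -1)
    (B : ℝ → ℝ) (u v : ℝ) (hu : u < p) (hv : q < v)
    (hB : ContDiffOn ℝ (↑N) B (Set.Ioo u v))
    (hBd : ∀ m, 1 ≤ m → m ≤ N → ∀ x ∈ Set.Icc p q,
      ε * ((-1 : ℝ) ^ m * iteratedDeriv m B x) < 0)
    (b : ℝ) (hb : b ∈ Set.Icc p q) :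
    (∀ x ∈ Set.Icc p q, x ≠ b →
      (∫ t in (0:ℝ)..1, deriv B (t * (x - b) + b)) = (B x - B b) / (x - b)) ∧
    ContDiffOn ℝ (↑(N - 1)) (fun x => ∫ t in (0:ℝ)..1, deriv B (t * (x - b) + b))
      (Set.Icc p q) ∧
    ∀ m, m ≤ N - 1 → ∀ x ∈ Set.Icc p q,
      ε * ((-1 : ℝ) ^ (1 + m) *
        iteratedDerivWithin m (fun y => ∫ t in (0:ℝ)..1, deriv B (t * (y - b) + b))
          (Set.Icc p q) x) < 0 :=
  stmt_6_general N hN p q hpq ε B u v hu hv hB hBd b hb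
end

section
/- Define F_n = ∑_{i=1}^{n} (−1)^{n−i} ξ_i² / ∏_{l≠i}(f_l − f_i) and, for 1 ≤ j ≤ n−1, F_j = (1 / ∏_{1≤k≤n−1, k≠j}(a_k − a_j)) · ∑_{i=1}^{n} (−1)^{n−i} (∏_{l≠i}(f_l − a_j)) ξ_i² / ∏_{l≠i}(f_l − f_i). Then for every 1 ≤ i ≤ n: ∑_{j=1}^{n−1} (−1)^i (∏_{1≤k≤n−1, k≠j}(f_i − a_k)) F_j + (−1)^{i+1} (∏_{k=1}^{n−1}(f_i − a_k)) F_n = ξ_i². (This expresses that the explicit formulas for the first integrals F_1, …, F_n of the Liouville manifold invert the defining linear system ∑_j b_{ij} F_j = ξ_i².) -/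
/-!
Substituting the formulas for `F_j`, the coefficient of `ξ_m²` in the `i`-th equation involves
`∑_j ∏_{l≠m} (f_l - a_j) · ∏_{k≠j} (x - a_k) / ∏_{k≠j} (a_k - a_j)` at `x = f_i`. Up to sign this
is the Lagrange interpolant at the nodes `a_1, …, a_{n-1}` of the monic polynomial
`∏_{l≠m} (x - f_l)` of degree `n - 1`, which differs from that polynomial by the monic nodal
polynomial `∏_k (x - a_k)`. So the sum is `∏_k (x - a_k) - ∏_{l≠m} (x - f_l)`: the first term
cancels the contribution of `F_n`, and the second vanishes at `x = f_i` unless `m = i`.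
-/

open Finset Polynomial

theorem neg_one_pow_mul_neg_one_pow_sub_one {R : Type*} [Monoid R] [HasDistribNeg R] {k : ℕ}
    (hk : 1 ≤ k) : (-1 : R) ^ k * (-1) ^ (k - 1) = -1 := by
  rw [← pow_add, show k + (k - 1) = 2 * (k - 1) + 1 by omega, Odd.neg_one_pow ⟨_, rfl⟩]

theorem Finset.prod_sub_comm {ι R : Type*} [CommRing R] (s : Finset ι) (f g : ι → R) :
    ∏ i ∈ s, (f i - g i) = (-1) ^ #s * ∏ i ∈ s, (g i - f i) := by
  rw [← prod_neg]
  simp only [neg_sub]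

theorem injOn_Icc_of_ne {α : Type*} {N : ℕ} {f : ℕ → α}
    (h : ∀ i, 1 ≤ i → i ≤ N → ∀ j, 1 ≤ j → j ≤ N → i ≠ j → f i ≠ f j) :
    Set.InjOn f (Icc 1 N) := fun i hi j hj => by
  simp only [coe_Icc, Set.mem_Icc] at hi hj
  exact not_imp_not.1 (h i hi.1 hi.2 j hj.1 hj.2)

namespace Lagrange

variable {F ι κ : Type*} [Field F] [DecidableEq ι] {s : Finset ι} {v : ι → F}

theorem eval_basis (s : Finset ι) (v : ι → F) (i : ι) (x : F) :
    (Lagrange.basis s v i).eval x = ∏ j ∈ s.erase i, (x - v j) / (v i - v j) := by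
  simp only [Lagrange.basis, eval_prod, basisDivisor, eval_mul, eval_C, eval_sub, eval_X,
    div_eq_inv_mul]

theorem eval_eq_sum_eval_mul_prod {p : F[X]} (hv : Set.InjOn v s) (hp : p.degree < #s) (x : F) :
    p.eval x = ∑ i ∈ s, p.eval (v i) * ∏ j ∈ s.erase i, (x - v j) / (v i - v j) := by
  conv_lhs => rw [eq_interpolate hv hp]
  simp only [interpolate_apply, eval_finsetSum, eval_mul, eval_C, eval_basis]

theorem eval_sub_eval_nodal_eq_sum {q : F[X]} (hq : q.Monic) (hdeg : q.natDegree = #s)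
    (hv : Set.InjOn v s) (x : F) :
    q.eval x - (nodal s v).eval x =
      ∑ i ∈ s, q.eval (v i) * ∏ j ∈ s.erase i, (x - v j) / (v i - v j) := by
  have hqdeg : q.degree = #s := by rw [degree_eq_natDegree hq.ne_zero, hdeg]
  have hlt : (q - nodal s v).degree < #s := hqdeg ▸ degree_sub_lt_left
    (by rw [hqdeg, degree_nodal]) hq.ne_zero (by rw [hq.leadingCoeff, nodal_monic.leadingCoeff])
  rw [← eval_sub, eval_eq_sum_eval_mul_prod hv hlt]
  refine sum_congr rfl fun i hi => ?_
  rw [eval_sub, eval_nodal_at_node hi, sub_zero]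

theorem sum_prod_sub_mul_prod_div_eq {t : Finset κ} (g : κ → F) (hv : Set.InjOn v s)
    (hcard : #t = #s) (x : F) :
    ∑ i ∈ s, (∏ l ∈ t, (g l - v i)) * ∏ j ∈ s.erase i, (x - v j) / (v j - v i) =
      ∏ j ∈ s, (x - v j) - ∏ l ∈ t, (x - g l) := by
  have hq : (nodal t g).natDegree = #s := by rw [natDegree_nodal, hcard]
  rw [← eval_nodal, ← eval_nodal (s := t), ← neg_sub,
    eval_sub_eval_nodal_eq_sum nodal_monic hq hv, ← sum_neg_distrib]
  refine sum_congr rfl fun i hi => ?_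
  have hbasis : ∏ j ∈ s.erase i, (x - v j) / (v j - v i) =
      (-1) ^ #(s.erase i) * ∏ j ∈ s.erase i, (x - v j) / (v i - v j) := by
    rw [← prod_neg]
    simp only [← div_neg, neg_sub]
  have hsign : (-1 : F) ^ #t * (-1) ^ #(s.erase i) = -1 := by
    rw [card_erase_of_mem hi, hcard, neg_one_pow_mul_neg_one_pow_sub_one (card_pos.2 ⟨i, hi⟩)]
  rw [eval_nodal, prod_sub_comm t, hbasis, mul_mul_mul_comm, hsign, neg_one_mul]

theorem sum_prod_mul_sum_sub_prod_mul_sum [DecidableEq κ] {t : Finset κ} (g c : κ → F)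
    (hv : Set.InjOn v s) (hcard : ∀ m ∈ t, #(t.erase m) = #s) (x : F) :
    ∑ i ∈ s, (∏ j ∈ s.erase i, (x - v j)) *
        ((1 / ∏ j ∈ s.erase i, (v j - v i)) * ∑ m ∈ t, c m * ∏ l ∈ t.erase m, (g l - v i)) -
      (∏ j ∈ s, (x - v j)) * ∑ m ∈ t, c m =
      -∑ m ∈ t, c m * ∏ l ∈ t.erase m, (x - g l) := by
  simp only [mul_sum]
  rw [sum_comm, ← sum_sub_distrib, ← sum_neg_distrib]
  refine sum_congr rfl fun m hm => ?_
  have hterm : ∀ i ∈ s, (∏ j ∈ s.erase i, (x - v j)) *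
      ((1 / ∏ j ∈ s.erase i, (v j - v i)) * (c m * ∏ l ∈ t.erase m, (g l - v i))) =
      c m * ((∏ l ∈ t.erase m, (g l - v i)) * ∏ j ∈ s.erase i, (x - v j) / (v j - v i)) := by
    intro i _
    rw [prod_div_distrib]
    ring
  rw [sum_congr rfl hterm, ← mul_sum, sum_prod_sub_mul_prod_div_eq g hv (hcard m hm)]
  ring

end Lagrange

theorem stmt_15_general (n : ℕ)
    (f : ℕ → ℝ) (hf : ∀ i, 1 ≤ i → i ≤ n → ∀ j, 1 ≤ j → j ≤ n → i ≠ j → f i ≠ f j)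
    (a : ℕ → ℝ) (ha : ∀ i, 1 ≤ i → i ≤ n - 1 → ∀ j, 1 ≤ j → j ≤ n - 1 → i ≠ j → a i ≠ a j)
    (ξ : ℕ → ℝ) (F : ℕ → ℝ)
    (hFn : F n = ∑ i ∈ Finset.Icc 1 n,
      (-1 : ℝ) ^ (n - i) * ξ i ^ 2 / ∏ l ∈ (Finset.Icc 1 n).erase i, (f l - f i))
    (hFj : ∀ j, 1 ≤ j → j ≤ n - 1 → F j =
      (1 / ∏ k ∈ (Finset.Icc 1 (n - 1)).erase j, (a k - a j)) *
        ∑ i ∈ Finset.Icc 1 n,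
          (-1 : ℝ) ^ (n - i) * (∏ l ∈ (Finset.Icc 1 n).erase i, (f l - a j)) * ξ i ^ 2 /
            ∏ l ∈ (Finset.Icc 1 n).erase i, (f l - f i)) :
    ∀ i, 1 ≤ i → i ≤ n →
      (∑ j ∈ Finset.Icc 1 (n - 1),
        (-1 : ℝ) ^ i * (∏ k ∈ (Finset.Icc 1 (n - 1)).erase j, (f i - a k)) * F j) +
        (-1 : ℝ) ^ (i + 1) * (∏ k ∈ Finset.Icc 1 (n - 1), (f i - a k)) * F n = ξ i ^ 2 := by
  intro i hi1 hin
  have hi : i ∈ Icc 1 n := mem_Icc.2 ⟨hi1, hin⟩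
  set c : ℕ → ℝ := fun m => (-1) ^ (n - m) * ξ m ^ 2 / ∏ l ∈ (Icc 1 n).erase m, (f l - f m)
  have hFc : ∀ j ∈ Icc 1 (n - 1), F j = (1 / ∏ k ∈ (Icc 1 (n - 1)).erase j, (a k - a j)) *
      ∑ m ∈ Icc 1 n, c m * ∏ l ∈ (Icc 1 n).erase m, (f l - a j) := fun j hj => by
    rw [hFj j (mem_Icc.1 hj).1 (mem_Icc.1 hj).2]
    exact congrArg _ (sum_congr rfl fun m _ => by ring)
  have hcard : ∀ m ∈ Icc 1 n, #((Icc 1 n).erase m) = #(Icc 1 (n - 1)) := fun m hm => by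
    simp [card_erase_of_mem hm]
  have hW : ∏ l ∈ (Icc 1 n).erase i, (f l - f i) ≠ 0 := prod_ne_zero_iff.2 fun l hl =>
    sub_ne_zero.2 fun h => ne_of_mem_erase hl (injOn_Icc_of_ne hf (mem_of_mem_erase hl) hi h)
  have hsign : (-1 : ℝ) ^ i * (-1) ^ (n - i) * (-1) ^ #((Icc 1 n).erase i) = -1 := by
    rw [← pow_add, Nat.add_sub_cancel' hin, hcard i hi, Nat.card_Icc, Nat.add_sub_cancel,
      neg_one_pow_mul_neg_one_pow_sub_one (hi1.trans hin)]
  calc _ = (-1) ^ i * (∑ j ∈ Icc 1 (n - 1), (∏ k ∈ (Icc 1 (n - 1)).erase j, (f i - a k)) * F j -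
          (∏ k ∈ Icc 1 (n - 1), (f i - a k)) * F n) := by
        simp only [mul_sub, mul_sum, mul_assoc, pow_succ]
        ring
    _ = -((-1) ^ i * ∑ m ∈ Icc 1 n, c m * ∏ l ∈ (Icc 1 n).erase m, (f i - f l)) := by
      rw [sum_congr rfl fun j hj => by rw [hFc j hj], hFn,
        Lagrange.sum_prod_mul_sum_sub_prod_mul_sum f c (injOn_Icc_of_ne ha) hcard]
      ring
    _ = -((-1) ^ i * (c i * ∏ l ∈ (Icc 1 n).erase i, (f i - f l))) := by
      rw [sum_eq_single_of_mem i hi fun m _ hmi =>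
        by rw [prod_eq_zero (mem_erase.2 ⟨Ne.symm hmi, hi⟩) (sub_self _), mul_zero]]
    _ = -((-1) ^ i * (-1) ^ (n - i) * (-1) ^ #((Icc 1 n).erase i)) * ξ i ^ 2 *
          ((∏ l ∈ (Icc 1 n).erase i, (f l - f i)) / ∏ l ∈ (Icc 1 n).erase i, (f l - f i)) := by
      rw [prod_sub_comm]; ring
    _ = ξ i ^ 2 := by rw [hsign, div_self hW]; ring

/-- inversion of the linear system (2.3) defining the first
integrals `F_1,…,F_n`.  With `F_n = ∑_i (−1)^{n−i} ξ_i²/∏_{l≠i}(f_l−f_i)` and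
`F_j = (1/∏_{k≠j}(a_k−a_j))·∑_i (−1)^{n−i}(∏_{l≠i}(f_l−a_j)) ξ_i²/∏_{l≠i}(f_l−f_i)`
for `j ≤ n−1`, one has, for every `1 ≤ i ≤ n`,
`∑_{j=1}^{n−1} (−1)^i (∏_{k≠j}(f_i−a_k)) F_j + (−1)^{i+1} (∏_{k=1}^{n−1}(f_i−a_k)) F_n
 = ξ_i²`. -/
theorem stmt_15 (n : ℕ) (hn : 2 ≤ n)
    (f : ℕ → ℝ) (hf : ∀ i, 1 ≤ i → i ≤ n → ∀ j, 1 ≤ j → j ≤ n → i ≠ j → f i ≠ f j)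
    (a : ℕ → ℝ) (ha : ∀ i, 1 ≤ i → i ≤ n - 1 → ∀ j, 1 ≤ j → j ≤ n - 1 → i ≠ j → a i ≠ a j)
    (ξ : ℕ → ℝ) (F : ℕ → ℝ)
    (hFn : F n = ∑ i ∈ Finset.Icc 1 n,
      (-1 : ℝ) ^ (n - i) * ξ i ^ 2 / ∏ l ∈ (Finset.Icc 1 n).erase i, (f l - f i))
    (hFj : ∀ j, 1 ≤ j → j ≤ n - 1 → F j =
      (1 / ∏ k ∈ (Finset.Icc 1 (n - 1)).erase j, (a k - a j)) *
        ∑ i ∈ Finset.Icc 1 n,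
          (-1 : ℝ) ^ (n - i) * (∏ l ∈ (Finset.Icc 1 n).erase i, (f l - a j)) * ξ i ^ 2 /
            ∏ l ∈ (Finset.Icc 1 n).erase i, (f l - f i)) :
    ∀ i, 1 ≤ i → i ≤ n →
      (∑ j ∈ Finset.Icc 1 (n - 1),
        (-1 : ℝ) ^ i * (∏ k ∈ (Finset.Icc 1 (n - 1)).erase j, (f i - a k)) * F j) +
        (-1 : ℝ) ^ (i + 1) * (∏ k ∈ Finset.Icc 1 (n - 1), (f i - a k)) * F n = ξ i ^ 2 :=
  stmt_15_general n f hf a ha ξ F hFn hFj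
end
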